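/- Assume the execution is admissible. Let s ∈ ℕ, s ≥ 1, be such that every directed cycle has nonnegative ω^{s−1/2}-weight. Then for every node v ∈ V and all times t < t', L_v(t') − L_v(t) ≥ (t'−t) + min{ Ψ_v^{s−1/2}(t), μ·(t'−t) − Ψ^{s−1/2}(t) + Ψ_v^{s−1/2}(t) }. -/

import Mathlib

open SimpleGraph

namespace GCS

variable {V : Type*}

def edgeWt (δ O : V → V → ℝ) (s : ℝ) (v w : V) : ℝ :=
  4 * s * δ v w - O v w

def walkWt {G : SimpleGraph V} (δ O : V → V → ℝ) (s : ℝ) {v w : V}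
    (p : G.Walk v w) : ℝ :=
  (p.darts.map fun d => edgeWt δ O s d.toProd.1 d.toProd.2).sum

def NonnegCycles (G : SimpleGraph V) (δ O : V → V → ℝ) (s : ℝ) : Prop :=
  ∀ (v : V) (c : G.Walk v v), c.IsCycle → 0 ≤ walkWt δ O s c

noncomputable def dS (G : SimpleGraph V) (δ O : V → V → ℝ) (s : ℝ) (v w : V) : ℝ :=
  sInf {x : ℝ | ∃ p : G.Walk v w, walkWt δ O s p = x}

noncomputable def Psi (G : SimpleGraph V) (δ O : V → V → ℝ) (s : ℝ)
    (L : V → ℝ → ℝ) (v : V) (t : ℝ) : ℝ :=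
  sSup {x : ℝ | ∃ w : V, ∃ p : G.Walk v w, x = L w t - L v t - walkWt δ O s p}

noncomputable def PsiAll (G : SimpleGraph V) (δ O : V → V → ℝ) (s : ℝ)
    (L : V → ℝ → ℝ) (t : ℝ) : ℝ :=
  ⨆ v : V, Psi G δ O s L v t

noncomputable def PsiE (G : SimpleGraph V) (δ O : V → V → ℝ) (s : ℝ)
    (L : V → ℝ → ℝ) (v : V) (t : ℝ) : EReal :=
  ⨆ w : V, ⨆ p : G.Walk v w, ((L w t - L v t - walkWt δ O s p : ℝ) : EReal)

def SlowCondAt (G : SimpleGraph V) (δ O : V → V → ℝ) (L : V → ℝ → ℝ)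
    (v : V) (t : ℝ) (s : ℕ) : Prop :=
  (∃ w, G.Adj v w ∧ 4 * (s : ℝ) * δ v w ≤ L v t - L w t - O v w) ∧
  (∀ w, G.Adj v w → -(4 * (s : ℝ) * δ v w) ≤ L v t - L w t - O v w)

def FastCondAt (G : SimpleGraph V) (δ O : V → V → ℝ) (L : V → ℝ → ℝ)
    (v : V) (t : ℝ) (s : ℕ) : Prop :=
  (∃ w, G.Adj v w ∧ L v t - L w t - O v w ≤ -((4 * (s : ℝ) + 2) * δ v w)) ∧
  (∀ w, G.Adj v w → L v t - L w t - O v w ≤ (4 * (s : ℝ) + 2) * δ v w)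

def Admissible (G : SimpleGraph V) (δ O : V → V → ℝ) (L : V → ℝ → ℝ)
    (ϑ μ : ℝ) : Prop :=
  ∀ (v : V) (t : ℝ),
    ((∃ s : ℕ, SlowCondAt G δ O L v t s) → deriv (L v) t ≤ ϑ) ∧
    ((∃ s : ℕ, FastCondAt G δ O L v t s) → 1 + μ ≤ deriv (L v) t)

def AdmissibleOn (G : SimpleGraph V) (δ O : V → V → ℝ) (L : V → ℝ → ℝ)
    (ϑ μ : ℝ) (a b : ℝ) : Prop :=
  ∀ (v : V), ∀ t ∈ Set.Icc a b,
    ((∃ s : ℕ, SlowCondAt G δ O L v t s) → deriv (L v) t ≤ ϑ) ∧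
    ((∃ s : ℕ, FastCondAt G δ O L v t s) → 1 + μ ≤ deriv (L v) t)


end GCS

/-!
Fix `μ' < μ` and let `Ψ = Ψ^{s-1/2}(t)`. Up to time `T = t + max Ψ / μ'` every node `x` keeps
`L_x(τ) - L_x(t) ≥ (1 + μ')(τ - t) + Ψ_x - max Ψ`. The first node `u` to touch this bound has
`Ψ_u > 0`, and following a walk realising `Ψ_u` shows that `u` satisfies the fast condition on level
`s - 1` at that moment, so its clock runs at rate `≥ 1 + μ > 1 + μ'` and it cannot cross the bound.
After `T` every clock still runs at rate `≥ 1`. Nonnegative cycles make `Ψ` a maximum over the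
finitely many paths, and letting `μ' → μ` gives the claim.
-/

open Set Filter Topology

theorem HasDerivWithinAt.eventually_nhdsGT_lt_of_pos {f : ℝ → ℝ} {f' x : ℝ}
    (hf : HasDerivWithinAt f f' (Ici x) x) (hf' : 0 < f') : ∀ᶠ z in 𝓝[>] x, f x < f z := by
  have hslope := hasDerivWithinAt_iff_tendsto_slope' (lt_irrefl x) |>.1 hf.Ioi_of_Ici
  filter_upwards [hslope.eventually (lt_mem_nhds hf'), self_mem_nhdsWithin] with z hz hxz
  rw [slope_def_field, div_pos_iff_of_pos_right (sub_pos.2 hxz)] at hz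
  linarith

theorem forall_nonneg_of_deriv_pos_of_eq_zero {ι : Type*} [Finite ι] {f f' : ι → ℝ → ℝ} {a b : ℝ}
    (hcont : ∀ i, ContinuousOn (f i) (Icc a b))
    (hderiv : ∀ i, ∀ τ ∈ Ico a b, HasDerivWithinAt (f i) (f' i τ) (Ici τ) τ)
    (ha : ∀ i, 0 ≤ f i a)
    (bound : ∀ τ ∈ Ico a b, (∀ j, 0 ≤ f j τ) → ∀ i, f i τ = 0 → 0 < f' i τ) :
    ∀ τ ∈ Icc a b, ∀ i, 0 ≤ f i τ := by
  let s := {τ | ∀ i, 0 ≤ f i τ}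
  have hclosed : IsClosed (s ∩ Icc a b) := by
    have hs : s ∩ Icc a b = (⋂ i, Icc a b ∩ f i ⁻¹' Ici 0) ∩ Icc a b := by
      ext τ
      simp only [s, mem_inter_iff, mem_iInter, mem_preimage, mem_Ici, mem_ofPred_eq]
      exact ⟨fun h => ⟨fun i => ⟨h.2, h.1 i⟩, h.2⟩, fun h => ⟨fun i => (h.1 i).2, h.2⟩⟩
    rw [hs]
    exact (isClosed_iInter fun i =>
      (hcont i).preimage_isClosed_of_isClosed isClosed_Icc isClosed_Ici).inter isClosed_Icc
  refine fun τ hτ => hclosed.Icc_subset_of_forall_mem_nhdsWithin ha ?_ hτ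
  rintro x ⟨hx, hxab⟩
  refine eventually_all.2 fun i => ?_
  rcases (hx i).eq_or_lt with hzero | hpos
  · filter_upwards [(hderiv i x hxab).eventually_nhdsGT_lt_of_pos
      (bound x hxab hx i hzero.symm)] with z hz
    linarith
  · exact ((hderiv i x hxab).continuousWithinAt.eventually (lt_mem_nhds hpos)).filter_mono
      (nhdsWithin_mono _ Ioi_subset_Ici_self) |>.mono fun _ => le_of_lt

namespace GCS

open SimpleGraph

variable {V : Type*} {G : SimpleGraph V} {δ O : V → V → ℝ} {σ : ℝ}

@[simp]
theorem walkWt_nil {v : V} : walkWt (G := G) δ O σ (Walk.nil (u := v)) = 0 := by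
  simp [walkWt]

@[simp]
theorem walkWt_cons {u v w : V} (h : G.Adj u v) (p : G.Walk v w) :
    walkWt δ O σ (Walk.cons h p) = edgeWt δ O σ u v + walkWt δ O σ p := by
  simp [walkWt]

theorem walkWt_append {u v w : V} (p : G.Walk u v) (q : G.Walk v w) :
    walkWt δ O σ (p.append q) = walkWt δ O σ p + walkWt δ O σ q := by
  simp [walkWt, Walk.darts_append]

theorem edgeWt_add_edgeWt_swap {x y : V} (hδsym : δ x y = δ y x) (hOanti : O x y = -O y x) :
    edgeWt δ O σ x y + edgeWt δ O σ y x = 8 * σ * δ x y := by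
  simp only [edgeWt, hδsym, hOanti]
  ring

theorem walkWt_eq_edgeWt_of_isPath_of_mem_edges {x y : V} {p : G.Walk y x} (hp : p.IsPath)
    (h : G.Adj x y) (he : s(x, y) ∈ p.edges) : walkWt δ O σ p = edgeWt δ O σ y x := by
  cases p with
  | nil => simp at he
  | @cons _ z _ hyz q =>
    rw [Walk.cons_isPath_iff] at hp
    rcases List.mem_cons.1 (Walk.edges_cons hyz q ▸ he) with he | he
    · obtain rfl : x = z := by
        rcases Sym2.eq_iff.1 he with ⟨rfl, -⟩ | ⟨rfl, -⟩
        · exact absurd rfl h.ne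
        · rfl
      obtain rfl := Walk.isPath_iff_nil.1 hp.1 |>.eq_nil
      simp
    · exact absurd (q.snd_mem_support_of_mem_edges he) hp.2

/-- `bypass` only deletes closed subwalks. -/
theorem walkWt_bypass_le [DecidableEq V] {x y : V} (p : G.Walk x y)
    (hclosed : ∀ z (c : G.Walk z z), c.length ≤ p.length → 0 ≤ walkWt δ O σ c) :
    walkWt δ O σ p.bypass ≤ walkWt δ O σ p := by
  induction p with
  | nil => simp [Walk.bypass]
  | @cons x z y h q ih =>
    have hq := ih fun w c hc => hclosed w c (by rw [Walk.length_cons]; omega)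
    rw [Walk.bypass]
    split_ifs with hs
    · have hloop := hclosed x (Walk.cons h (q.bypass.takeUntil x hs)) (by
        have := q.bypass.length_takeUntil_le_length hs
        have := q.length_bypass_le_length
        rw [Walk.length_cons, Walk.length_cons]; omega)
      have hsplit := walkWt_append (δ := δ) (O := O) (σ := σ) (q.bypass.takeUntil x hs)
        (q.bypass.dropUntil x hs)
      rw [q.bypass.take_spec hs] at hsplit
      simp only [walkWt_cons] at hloop ⊢
      linarith
    · simp only [walkWt_cons]
      linarith

theorem walkWt_nonneg_of_nonnegCycles (hnc : NonnegCycles G δ O σ)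
    (hback : ∀ x y, G.Adj x y → 0 ≤ edgeWt δ O σ x y + edgeWt δ O σ y x)
    {x : V} (c : G.Walk x x) : 0 ≤ walkWt δ O σ c := by
  induction hn : c.length using Nat.strong_induction_on generalizing x with
  | _ n ih =>
  classical
  cases c with
  | nil => simp
  | @cons _ y _ h q =>
    have hq := walkWt_bypass_le q fun z c hc => ih c.length (by rw [Walk.length_cons] at hn; omega) c rfl
    rw [walkWt_cons]
    by_cases he : s(x, y) ∈ q.bypass.edges
    -- then `cons h q.bypass` goes back and forth along one edge, which is not a cycle
    · have := walkWt_eq_edgeWt_of_isPath_of_mem_edges (δ := δ) (O := O) (σ := σ)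
        q.bypass_isPath h he
      linarith [hback x y h]
    · have := hnc x _ ((Walk.cons_isCycle_iff _ h).2 ⟨q.bypass_isPath, he⟩)
      rw [walkWt_cons] at this
      linarith

variable {L : V → ℝ → ℝ}

/-- The supremum is a maximum over the finitely many paths, since bypassing does not add weight. -/
theorem isGreatest_Psi [Finite V]
    (hclosed : ∀ x (c : G.Walk x x), 0 ≤ walkWt δ O σ c) (u : V) (t : ℝ) :
    IsGreatest {y | ∃ w, ∃ p : G.Walk u w, y = L w t - L u t - walkWt δ O σ p}
      (Psi G δ O σ L u t) := by
  classical
  have : Fintype V := Fintype.ofFinite V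
  let value (q : Σ w, G.Path u w) := L q.1 t - L u t - walkWt δ O σ q.2.1
  obtain ⟨q, -, hq⟩ := Finset.univ.exists_max_image value ⟨⟨u, Walk.nil, Walk.IsPath.nil⟩, by simp⟩
  have hgreatest : IsGreatest {y | ∃ w, ∃ p : G.Walk u w, y = L w t - L u t - walkWt δ O σ p}
      (value q) := by
    refine ⟨⟨q.1, q.2.1, rfl⟩, ?_⟩
    rintro _ ⟨w, p, rfl⟩
    have := hq ⟨w, p.bypass, p.bypass_isPath⟩ (Finset.mem_univ _)
    have := walkWt_bypass_le p fun z c _ => hclosed z c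
    simp only [value] at *
    linarith
  rwa [Psi, hgreatest.csSup_eq]

theorem Psi_le_PsiAll [Finite V] (u : V) (t : ℝ) : Psi G δ O σ L u t ≤ PsiAll G δ O σ L t :=
  le_ciSup (f := fun v => Psi G δ O σ L v t) (Finite.bddAbove_range _) u

/-- The first edge of a walk realising `Ψ_u(t)` gives the first half of the fast condition, and
prepending an edge `w → u` to that walk gives the second. -/
theorem fastCondAt_of_forall_add_Psi_le [Finite V] {k : ℕ} (hσ : σ = k + 1 / 2)
    (hδsym : ∀ v w, G.Adj v w → δ v w = δ w v) (hOanti : ∀ v w, G.Adj v w → O v w = -O w v)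
    (hclosed : ∀ x (c : G.Walk x x), 0 ≤ walkWt δ O σ c)
    {u : V} {t τ K : ℝ} (hpos : 0 < Psi G δ O σ L u t)
    (hle : ∀ x, L x t + Psi G δ O σ L x t + K ≤ L x τ)
    (heq : L u τ = L u t + Psi G δ O σ L u t + K) :
    FastCondAt G δ O L u τ k := by
  have hlevel : ∀ x y, (4 * (k : ℝ) + 2) * δ x y = 4 * σ * δ x y := fun _ _ => by rw [hσ]; ring
  obtain ⟨⟨w₀, p₀, hp₀⟩, -⟩ := isGreatest_Psi (L := L) hclosed u t
  constructor
  · cases p₀ with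
    | nil => rw [walkWt_nil] at hp₀; linarith
    | @cons _ x _ hux p =>
      obtain ⟨-, hx⟩ := isGreatest_Psi (L := L) hclosed x t
      have := hx ⟨w₀, p, rfl⟩
      refine ⟨x, hux, ?_⟩
      rw [walkWt_cons, edgeWt] at hp₀
      linarith [hle x, hlevel u x]
  · intro w hwu
    obtain ⟨-, hw⟩ := isGreatest_Psi (L := L) hclosed w t
    have := hw ⟨w₀, Walk.cons hwu.symm p₀, rfl⟩
    rw [walkWt_cons, edgeWt, hδsym w u hwu.symm, hOanti w u hwu.symm] at this
    linarith [hle w, hlevel u w]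

theorem add_Psi_le_of_mem_Icc [Finite V] {k : ℕ} (hσ : σ = k + 1 / 2)
    (hδsym : ∀ v w, G.Adj v w → δ v w = δ w v) (hOanti : ∀ v w, G.Adj v w → O v w = -O w v)
    (hclosed : ∀ x (c : G.Walk x x), 0 ≤ walkWt δ O σ c) {ϑ μ μ' : ℝ}
    (hdiff : ∀ v, Differentiable ℝ (L v)) (hlo : ∀ v t, 1 ≤ deriv (L v) t)
    (hadm : Admissible G δ O L ϑ μ) (hμ' : 0 < μ') (hμ'μ : μ' < μ) {t T : ℝ}
    (hT : μ' * (T - t) ≤ PsiAll G δ O σ L t) :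
    ∀ τ ∈ Icc t T, ∀ x,
      L x t + Psi G δ O σ L x t + ((1 + μ') * (τ - t) - PsiAll G δ O σ L t) ≤ L x τ := by
  set Ψ := fun x => Psi G δ O σ L x t
  set ΨA := PsiAll G δ O σ L t
  let slack x τ := L x τ - (L x t + Ψ x + ((1 + μ') * (τ - t) - ΨA))
  have hcont x : ContinuousOn (slack x) (Icc t T) := by
    have := (hdiff x).continuous
    fun_prop
  have hderiv x τ : HasDerivAt (slack x) (deriv (L x) τ - (1 + μ')) τ := by
    have := ((hasDerivAt_id τ).sub_const t).const_mul (1 + μ') |>.sub_const ΨA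
      |>.const_add (L x t + Ψ x)
    rw [mul_one] at this
    exact (hdiff x τ).hasDerivAt.sub this
  have hstart x : 0 ≤ slack x t := by
    simpa [slack] using Psi_le_PsiAll (G := G) (δ := δ) (O := O) (σ := σ) (L := L) x t
  have hpush : ∀ τ ∈ Ico t T, (∀ x, 0 ≤ slack x τ) → ∀ u, slack u τ = 0 →
      0 < deriv (L u) τ - (1 + μ') := by
    intro τ hτ hall u hu
    have hgain : τ - t ≤ L u τ - L u t := by
      simpa using mul_sub_le_image_sub_of_le_deriv (hdiff u) (hlo u) hτ.1
    have hpos : 0 < Ψ u := by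
      have := mul_lt_mul_of_pos_left (sub_lt_sub_right hτ.2 t) hμ'
      simp only [slack] at hu
      linarith
    have hfast := fastCondAt_of_forall_add_Psi_le (t := t) (τ := τ)
      (K := (1 + μ') * (τ - t) - ΨA) hσ hδsym hOanti hclosed hpos
      (fun x => by linarith [hall x]) (by linarith)
    linarith [(hadm u τ).2 ⟨k, hfast⟩]
  intro τ hτ x
  have := forall_nonneg_of_deriv_pos_of_eq_zero hcont
    (fun x τ _ => (hderiv x τ).hasDerivWithinAt) hstart hpush τ hτ x
  linarith

theorem catchup_of_lt [Finite V] {k : ℕ} (hσ : σ = k + 1 / 2)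
    (hδsym : ∀ v w, G.Adj v w → δ v w = δ w v) (hOanti : ∀ v w, G.Adj v w → O v w = -O w v)
    (hclosed : ∀ x (c : G.Walk x x), 0 ≤ walkWt δ O σ c) {ϑ μ μ' : ℝ}
    (hdiff : ∀ v, Differentiable ℝ (L v)) (hlo : ∀ v t, 1 ≤ deriv (L v) t)
    (hadm : Admissible G δ O L ϑ μ) (hμ' : 0 < μ') (hμ'μ : μ' < μ) (v : V) {t t' : ℝ}
    (htt' : t ≤ t') :
    (t' - t) + min (Psi G δ O σ L v t)
        (μ' * (t' - t) - PsiAll G δ O σ L t + Psi G δ O σ L v t) ≤ L v t' - L v t := by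
  have phase := fun T (hT : μ' * (T - t) ≤ PsiAll G δ O σ L t) =>
    add_Psi_le_of_mem_Icc hσ hδsym hOanti hclosed hdiff hlo hadm hμ' hμ'μ hT
  by_cases hshort : μ' * (t' - t) ≤ PsiAll G δ O σ L t
  · have := phase t' hshort t' ⟨htt', le_rfl⟩ v
    linarith [min_le_right (Psi G δ O σ L v t)
      (μ' * (t' - t) - PsiAll G δ O σ L t + Psi G δ O σ L v t)]
  · set T := t + PsiAll G δ O σ L t / μ'
    have hT : μ' * (T - t) = PsiAll G δ O σ L t := by simp only [T]; field_simp; ring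
    have hΨ : 0 ≤ Psi G δ O σ L v t := by
      simpa using (isGreatest_Psi (L := L) hclosed v t).2 ⟨v, Walk.nil, rfl⟩
    have htT : t ≤ T := by
      simp only [T]
      linarith [div_nonneg (hΨ.trans (Psi_le_PsiAll v t)) hμ'.le]
    have hTt' : T ≤ t' := by nlinarith
    have := phase T hT.le T ⟨htT, le_rfl⟩ v
    have := mul_sub_le_image_sub_of_le_deriv (hdiff v) (hlo v) hTt'
    linarith [min_le_left (Psi G δ O σ L v t)
      (μ' * (t' - t) - PsiAll G δ O σ L t + Psi G δ O σ L v t)]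

end GCS

theorem catchup_general
    {V : Type*} [Fintype V]
    (G : SimpleGraph V)
    (δ O : V → V → ℝ)
    (hδpos : ∀ v w, G.Adj v w → 0 < δ v w)
    (hδsym : ∀ v w, G.Adj v w → δ v w = δ w v)
    (hOanti : ∀ v w, G.Adj v w → O v w = -O w v)
    (L : V → ℝ → ℝ) (ϑ μ : ℝ) (hμ : 0 < μ)
    (hdiff : ∀ v, Differentiable ℝ (L v))
    (hlo : ∀ (v : V) (t : ℝ), 1 ≤ deriv (L v) t)
    (hadm : GCS.Admissible G δ O L ϑ μ)
    (s : ℕ) (hs1 : 1 ≤ s) (hnc : GCS.NonnegCycles G δ O ((s : ℝ) - 1/2))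
    (v : V) (t t' : ℝ) (htt' : t < t') :
    (t' - t) + min (GCS.Psi G δ O ((s : ℝ) - 1/2) L v t)
        (μ * (t' - t) - GCS.PsiAll G δ O ((s : ℝ) - 1/2) L t
          + GCS.Psi G δ O ((s : ℝ) - 1/2) L v t) ≤
      L v t' - L v t := by
  have hσ : (s : ℝ) - 1 / 2 = ((s - 1 : ℕ) : ℝ) + 1 / 2 := by
    rw [Nat.cast_sub hs1]
    ring
  have hs : (1 : ℝ) ≤ s := by exact_mod_cast hs1
  have hclosed : ∀ x (c : G.Walk x x), 0 ≤ GCS.walkWt δ O ((s : ℝ) - 1 / 2) c :=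
    fun x c => GCS.walkWt_nonneg_of_nonnegCycles hnc (fun x y h => by
      rw [GCS.edgeWt_add_edgeWt_swap (hδsym x y h) (hOanti x y h)]
      nlinarith [hδpos x y h]) c
  have hcont : Continuous fun m => (t' - t) + min (GCS.Psi G δ O ((s : ℝ) - 1/2) L v t)
      (m * (t' - t) - GCS.PsiAll G δ O ((s : ℝ) - 1/2) L t
        + GCS.Psi G δ O ((s : ℝ) - 1/2) L v t) := by
    fun_prop
  refine le_of_tendsto (x := 𝓝[<] μ) ((hcont.tendsto μ).mono_left nhdsWithin_le_nhds) ?_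
  filter_upwards [Ioo_mem_nhdsLT hμ] with μ' hμ'
  exact GCS.catchup_of_lt hσ hδsym hOanti hclosed hdiff hlo hadm hμ'.1 hμ'.2 v htt'.le

/-- catch-up lemma:
`L_v(t') - L_v(t) ≥ (t'-t) + min{Ψ_v^{s-1/2}(t), μ(t'-t) - Ψ^{s-1/2}(t) + Ψ_v^{s-1/2}(t)}`. -/
theorem catchup
    {V : Type*} [Fintype V] [DecidableEq V] [Nonempty V]
    (G : SimpleGraph V) (hconn : G.Connected)
    (δ O : V → V → ℝ)
    (hδpos : ∀ v w, G.Adj v w → 0 < δ v w)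
    (hδsym : ∀ v w, G.Adj v w → δ v w = δ w v)
    (hOanti : ∀ v w, G.Adj v w → O v w = -O w v)
    (L : V → ℝ → ℝ) (ϑ μ : ℝ) (hϑ : 1 < ϑ) (hμ : 0 < μ)
    (hdiff : ∀ v, Differentiable ℝ (L v))
    (hlo : ∀ (v : V) (t : ℝ), 1 ≤ deriv (L v) t)
    (hhi : ∀ (v : V) (t : ℝ), deriv (L v) t ≤ ϑ * (1 + μ))
    (hadm : GCS.Admissible G δ O L ϑ μ)
    (s : ℕ) (hs1 : 1 ≤ s) (hnc : GCS.NonnegCycles G δ O ((s : ℝ) - 1/2))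
    (v : V) (t t' : ℝ) (htt' : t < t') :
    (t' - t) + min (GCS.Psi G δ O ((s : ℝ) - 1/2) L v t)
        (μ * (t' - t) - GCS.PsiAll G δ O ((s : ℝ) - 1/2) L t
          + GCS.Psi G δ O ((s : ℝ) - 1/2) L v t) ≤
      L v t' - L v t :=
  catchup_general G δ O hδpos hδsym hOanti L ϑ μ hμ hdiff hlo hadm s hs1 hnc v t t' htt'
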